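/- With G, p, χ_a, χ_b, σ_a, σ_b, N_b, ω as before (ω - σ_b ω = Res_{N_b} χ_a), let N_a = ker χ_a. Then the subgroup N_a ∩ ker ω is normal in G and has index p³ in G. -/

import Mathlib

/-!  Framework: mod-p group cohomology in low degrees via explicit
inhomogeneous cochains, cup products, restriction, corestriction
(transfer), and triple Massey products. -/

namespace MasseyGalois

variable {p : ℕ}

/-- A (degree-one) character: an additive character `G → ℤ/p`,
i.e. a 1-cocycle; these are exactly the elements of `H¹(G, ℤ/p)`. -/
def IsChar (p : ℕ) {G : Type} [Group G] (χ : G → ZMod p) : Prop :=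
  ∀ σ τ : G, χ (σ * τ) = χ σ + χ τ

theorem IsChar.one {G : Type} [Group G] {χ : G → ZMod p} (h : IsChar p χ) :
    χ 1 = 0 := by
  have h1 := h 1 1
  rw [mul_one] at h1
  linear_combination -h1

theorem IsChar.inv {G : Type} [Group G] {χ : G → ZMod p} (h : IsChar p χ)
    (σ : G) : χ σ⁻¹ = -χ σ := by
  have h1 := h σ σ⁻¹
  rw [mul_inv_cancel, h.one] at h1
  linear_combination -h1

/-- The kernel of a character, as a subgroup. -/
def charKer {G : Type} [Group G] (χ : G → ZMod p) (h : IsChar p χ) :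
    Subgroup G where
  carrier := {σ | χ σ = 0}
  one_mem' := h.one
  mul_mem' := by
    intro a b ha hb
    simp only [Set.mem_setOf_eq] at *
    rw [h a b, ha, hb, add_zero]
  inv_mem' := by
    intro a ha
    simp only [Set.mem_setOf_eq] at *
    rw [h.inv, ha, neg_zero]

theorem mem_charKer_iff {G : Type} [Group G] {χ : G → ZMod p}
    (h : IsChar p χ) {σ : G} : σ ∈ charKer χ h ↔ χ σ = 0 := Iff.rfl

theorem charKer_normal {G : Type} [Group G] (χ : G → ZMod p)
    (h : IsChar p χ) : (charKer χ h).Normal := by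
  constructor
  intro n hn g
  show χ (g * n * g⁻¹) = 0
  rw [h, h, h.inv]
  have hn' : χ n = 0 := hn
  rw [hn']
  ring

theorem charKer_comm_mem {G : Type} [Group G] {χ : G → ZMod p}
    (h : IsChar p χ) (σ τ : G) : σ * τ * σ⁻¹ * τ⁻¹ ∈ charKer χ h := by
  show χ (σ * τ * σ⁻¹ * τ⁻¹) = 0
  rw [h, h, h, h.inv, h.inv]
  ring

/-- Coboundary of a 1-cochain (inhomogeneous cochains, trivial action). -/
def d1 {G : Type} [Group G] (φ : G → ZMod p) : G → G → ZMod p :=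
  fun σ τ => φ σ + φ τ - φ (σ * τ)

/-- Coboundary of a 2-cochain. -/
def d2 {G : Type} [Group G] (f : G → G → ZMod p) : G → G → G → ZMod p :=
  fun σ τ ρ => f τ ρ - f (σ * τ) ρ + f σ (τ * ρ) - f σ τ

/-- Cup product of two 1-cochains. -/
def cup {G : Type} (χ χ' : G → ZMod p) : G → G → ZMod p :=
  fun σ τ => χ σ * χ' τ

def IsCocycle2 {G : Type} [Group G] (f : G → G → ZMod p) : Prop :=
  ∀ σ τ ρ, d2 f σ τ ρ = 0

def IsCoboundary2 {G : Type} [Group G] (f : G → G → ZMod p) : Prop :=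
  ∃ φ : G → ZMod p, f = d1 φ

/-- Two 2-cochains represent the same class in `H²`. -/
def Cohomologous {G : Type} [Group G] (f g : G → G → ZMod p) : Prop :=
  IsCoboundary2 (f - g)

/-- `z` is the value `χ₁ ∪ φ₂₃ + φ₁₂ ∪ χ₃` of a defining system for the
triple Massey product `⟨χ₁, χ₂, χ₃⟩`. -/
def MasseyRep {G : Type} [Group G] (χ₁ χ₂ χ₃ : G → ZMod p)
    (z : G → G → ZMod p) : Prop :=
  ∃ φ₁₂ φ₂₃ : G → ZMod p,
    d1 φ₁₂ = cup χ₁ χ₂ ∧ d1 φ₂₃ = cup χ₂ χ₃ ∧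
    z = cup χ₁ φ₂₃ + cup φ₁₂ χ₃

/-- The set of all 2-cocycles whose class lies in the triple Massey
product `⟨χ₁, χ₂, χ₃⟩ ⊆ H²`; as this set is closed under coboundaries,
equalities/membership statements about it faithfully encode the
corresponding statements about the subset of `H²`. -/
def MasseySet {G : Type} [Group G] (χ₁ χ₂ χ₃ : G → ZMod p) :
    Set (G → G → ZMod p) :=
  {z | ∃ z', MasseyRep χ₁ χ₂ χ₃ z' ∧ Cohomologous z z'}

/-- The Massey product is essential: non-empty but not containing `0`. -/
def MasseyEssential {G : Type} [Group G] (χ₁ χ₂ χ₃ : G → ZMod p) : Prop :=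
  (MasseySet χ₁ χ₂ χ₃).Nonempty ∧
    (0 : G → G → ZMod p) ∉ MasseySet χ₁ χ₂ χ₃

/-- `ℤ/p`-linear independence of a pair of characters. -/
def LinIndepPair {G : Type} (χ χ' : G → ZMod p) : Prop :=
  ∀ a b : ZMod p, (∀ g : G, a * χ g + b * χ' g = 0) → a = 0 ∧ b = 0

/-- Restriction of a 1-cochain to a subgroup. -/
def res1 {G : Type} [Group G] (U : Subgroup G) (χ : G → ZMod p) :
    ↥U → ZMod p := fun u => χ ↑u

/-- Restriction of a 2-cochain to a subgroup. -/
def res2 {G : Type} [Group G] (U : Subgroup G) (f : G → G → ZMod p) :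
    ↥U → ↥U → ZMod p := fun u v => f ↑u ↑v

/-- Corestriction (transfer) on `H¹` from a finite-index subgroup. -/
noncomputable def cor1 {G : Type} [Group G] (K : Subgroup G)
    (φ : ↥K → ZMod p) : G → ZMod p := by
  classical
  exact if h : K.FiniteIndex ∧ IsChar p φ then
    haveI := h.1
    let φ' : ↥K →* Multiplicative (ZMod p) :=
      { toFun := fun k => Multiplicative.ofAdd (φ k)
        map_one' := by
          show Multiplicative.ofAdd (φ 1) = 1
          rw [h.2.one]; rfl
        map_mul' := fun a b => by
          show Multiplicative.ofAdd (φ (a * b)) = _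
          rw [h.2 a b]; rfl }
    fun g => Multiplicative.toAdd (MonoidHom.transfer φ' g)
  else 0

/-- Exactness of `H¹(ker χ) →(Cor) H¹(H) →(χ ∪ ·) H²(H)` at `H¹(H)`. -/
def ExactAtH1 {H : Type} [Group H] (p : ℕ) (χ : H → ZMod p)
    (hχ : IsChar p χ) : Prop :=
  ∀ lam : H → ZMod p, IsChar p lam →
    (IsCoboundary2 (cup χ lam) ↔
      ∃ μ : ↥(charKer χ hχ) → ZMod p, IsChar p μ ∧
        lam = cor1 (charKer χ hχ) μ)

/-- Exactness of `H¹(H) →(χ ∪ ·) H²(H) →(Res) H²(ker χ)` at `H²(H)`. -/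
def ExactAtH2 {H : Type} [Group H] (p : ℕ) (χ : H → ZMod p)
    (hχ : IsChar p χ) : Prop :=
  ∀ f : H → H → ZMod p, IsCocycle2 f →
    (IsCoboundary2 (res2 (charKer χ hχ) f) ↔
      ∃ lam : H → ZMod p, IsChar p lam ∧ Cohomologous f (cup χ lam))

end MasseyGalois

/-!
`N_b` has index `p` in `G`. Inside `N_b`, the element `σ_a (σ_b σ_a σ_b⁻¹)⁻¹` has
`ω`-value `χ_a(σ_a) = 1`, so `ker ω` has index `p` in `N_b`; correcting `σ_a` by a power of
that element gives an element of `ker ω` on which `χ_a` is `1`, so intersecting with `N_a`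
costs another factor `p`.
For normality, `G` is generated by `N_b` and `σ_b`: conjugation by `N_b` preserves the character
`ω`, and conjugation by `σ_b` changes `ω` by `χ_a`, which vanishes on `N_a`.
-/

namespace MasseyGalois

variable {p : ℕ} {G : Type} [Group G]

theorem IsChar.conj {χ : G → ZMod p} (h : IsChar p χ) (g x : G) :
    χ (g * x * g⁻¹) = χ x := by
  rw [h, h, h.inv]
  ring

theorem IsChar.res1 {χ : G → ZMod p} (h : IsChar p χ) (U : Subgroup G) :
    IsChar p (res1 U χ) :=
  fun u v => h u v

def IsChar.toMonoidHom {χ : G → ZMod p} (h : IsChar p χ) : G →* Multiplicative (ZMod p) where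
  toFun g := Multiplicative.ofAdd (χ g)
  map_one' := by simp [h.one]
  map_mul' a b := by simp [h a b]

theorem IsChar.ker_toMonoidHom {χ : G → ZMod p} (h : IsChar p χ) :
    h.toMonoidHom.ker = charKer χ h := by
  ext g
  simp [IsChar.toMonoidHom, mem_charKer_iff]

theorem IsChar.zpow {χ : G → ZMod p} (h : IsChar p χ) (g : G) (n : ℤ) :
    χ (g ^ n) = n * χ g := by
  have := congrArg Multiplicative.toAdd (map_zpow h.toMonoidHom g n)
  simpa [IsChar.toMonoidHom] using this

theorem index_charKer_of_apply_eq_one {χ : G → ZMod p} (hχ : IsChar p χ) {g : G}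
    (hg : χ g = 1) : (charKer χ hχ).index = p := by
  have hsurj : Function.Surjective hχ.toMonoidHom := fun y =>
    ⟨g ^ (ZMod.cast y.toAdd : ℤ), by simp [IsChar.toMonoidHom, hχ.zpow, hg]⟩
  rw [← hχ.ker_toMonoidHom, Subgroup.index_ker, MonoidHom.range_eq_top.mpr hsurj,
    Subgroup.card_top, Nat.card_congr Multiplicative.toAdd, Nat.card_zmod]

theorem exists_zpow_mul_mem_charKer {χ : G → ZMod p} (hχ : IsChar p χ) {σ : G}
    (hσ : χ σ = 1) (g : G) : ∃ n : ℤ, ∃ h ∈ charKer χ hχ, g = σ ^ n * h := by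
  refine ⟨ZMod.cast (χ g), σ ^ (-ZMod.cast (χ g) : ℤ) * g, ?_, by group⟩
  rw [mem_charKer_iff, hχ, hχ.zpow, hσ]
  simp

theorem exists_mem_charKer_apply_eq_one {α β : G → ZMod p} (hα : IsChar p α)
    (hβ : IsChar p β) {x v : G} (hαx : α x = 1) (hβv : β v = 1) (hαv : α v = 0) :
    ∃ u ∈ charKer β hβ, α u = 1 := by
  refine ⟨x * v ^ (-ZMod.cast (β x) : ℤ), ?_, ?_⟩
  · rw [mem_charKer_iff, hβ, hβ.zpow, hβv]
    simp
  · rw [hα, hα.zpow, hαx, hαv, mul_zero, add_zero]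

theorem index_charKer_inf {χ : G → ZMod p} (hχ : IsChar p χ) {H : Subgroup G} {h : G}
    (hH : h ∈ H) (hh : χ h = 1) : (charKer χ hχ ⊓ H).index = p * H.index := by
  rw [← Subgroup.relIndex_mul_index inf_le_right, Subgroup.inf_relIndex_right]
  exact congrArg (· * H.index)
    (index_charKer_of_apply_eq_one (hχ.res1 H) (g := ⟨h, hH⟩) hh)


section TwistedKernel

variable {χa χb : G → ZMod p} {ha : IsChar p χa} {hb : IsChar p χb}
  {ω : ↥(charKer χb hb) → ZMod p} {hω : IsChar p ω}

theorem mem_inf_map_charKer_iff {g : G} :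
    g ∈ charKer χa ha ⊓ Subgroup.map (charKer χb hb).subtype (charKer ω hω) ↔
      χa g = 0 ∧ ∃ hg : χb g = 0, ω ⟨g, hg⟩ = 0 := by
  simp [mem_charKer_iff]

theorem mem_normalizer_inf_map_charKer {c : G}
    (hc : ∀ (k : G) (hk : χb k = 0) (hck : χb (c * k * c⁻¹) = 0), χa k = 0 →
      ω ⟨c * k * c⁻¹, hck⟩ = ω ⟨k, hk⟩) :
    c ∈ Subgroup.normalizer
      ↑(charKer χa ha ⊓ Subgroup.map (charKer χb hb).subtype (charKer ω hω)) := by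
  rw [Subgroup.mem_normalizer_iff]
  intro k
  rw [mem_inf_map_charKer_iff, mem_inf_map_charKer_iff, ha.conj]
  constructor
  · rintro ⟨hka, hkb, hkω⟩
    have hckb : χb (c * k * c⁻¹) = 0 := by rwa [hb.conj]
    exact ⟨hka, hckb, (hc k hkb hckb hka).trans hkω⟩
  · rintro ⟨hka, hckb, hckω⟩
    have hkb : χb k = 0 := by rwa [hb.conj] at hckb
    exact ⟨hka, hkb, (hc k hkb hckb hka).symm.trans hckω⟩

theorem inf_map_charKer_normal {σb : G} (hbb : χb σb = 1)
    (hωeq : ∀ h : ↥(charKer χb hb),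
      ω h - ω ⟨σb * ↑h * σb⁻¹, (charKer_normal χb hb).conj_mem ↑h h.2 σb⟩ = χa ↑h) :
    (charKer χa ha ⊓ Subgroup.map (charKer χb hb).subtype (charKer ω hω)).Normal := by
  rw [← Subgroup.normalizer_eq_top_iff, eq_top_iff]
  intro g _
  obtain ⟨n, h, hh, rfl⟩ := exists_zpow_mul_mem_charKer hb hbb g
  refine mul_mem (zpow_mem (mem_normalizer_inf_map_charKer ?_) n)
    (mem_normalizer_inf_map_charKer ?_)
  · intro k hkb _ hka
    linear_combination -hka - hωeq ⟨k, hkb⟩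
  · exact fun k hkb _ _ => hω.conj ⟨h, hh⟩ ⟨k, hkb⟩

theorem index_inf_map_charKer {σa σb : G} (haa : χa σa = 1) (hba : χb σa = 0)
    (hbb : χb σb = 1)
    (hωeq : ∀ h : ↥(charKer χb hb),
      ω h - ω ⟨σb * ↑h * σb⁻¹, (charKer_normal χb hb).conj_mem ↑h h.2 σb⟩ = χa ↑h) :
    (charKer χa ha ⊓ Subgroup.map (charKer χb hb).subtype (charKer ω hω)).index = p ^ 3 := by
  let x : charKer χb hb := ⟨σa, hba⟩
  let v : charKer χb hb := x * ⟨σb * σa * σb⁻¹, (charKer_normal χb hb).conj_mem σa hba σb⟩⁻¹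
  have hωv : ω v = 1 := by
    rw [hω, hω.inv, ← sub_eq_add_neg, hωeq x]
    exact haa
  have hav : res1 _ χa v = 0 := by
    show χa (σa * (σb * σa * σb⁻¹)⁻¹) = 0
    rw [ha, ha.inv, ha.conj, add_neg_cancel]
  obtain ⟨u, hu, hau⟩ := exists_mem_charKer_apply_eq_one (ha.res1 _) hω (x := x) haa hωv hav
  calc _ = p * (Subgroup.map (charKer χb hb).subtype (charKer ω hω)).index :=
        index_charKer_inf ha ⟨u, hu, rfl⟩ hau
    _ = p * ((charKer ω hω).index * (charKer χb hb).index) := by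
        rw [Subgroup.index_map_subtype]
    _ = p ^ 3 := by
        rw [index_charKer_of_apply_eq_one hω hωv, index_charKer_of_apply_eq_one hb hbb]
        ring

end TwistedKernel

end MasseyGalois

open MasseyGalois in
theorem ker_omega_normal_of_index_p_cubed_general {p : ℕ} {G : Type}
    [Group G] (χa χb : G → ZMod p) (ha : IsChar p χa) (hb : IsChar p χb)
    (σa σb : G)
    (haa : χa σa = 1) (hba : χb σa = 0) (hbb : χb σb = 1)
    (ω : ↥(charKer χb hb) → ZMod p) (hω : IsChar p ω)
    (hωeq : ∀ h : ↥(charKer χb hb),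
      ω h - ω ⟨σb * ↑h * σb⁻¹, (charKer_normal χb hb).conj_mem ↑h h.2 σb⟩ =
        χa ↑h) :
    (charKer χa ha ⊓
        Subgroup.map (charKer χb hb).subtype (charKer ω hω)).Normal ∧
    (charKer χa ha ⊓
        Subgroup.map (charKer χb hb).subtype (charKer ω hω)).index = p ^ 3 :=
  ⟨inf_map_charKer_normal hbb hωeq, index_inf_map_charKer haa hba hbb hωeq⟩

open MasseyGalois in
/-- Proposition (b), (c): with `ω - σ_b ω = Res_{N_b} χ_a`, the subgroup
`N_a ∩ ker ω` is normal in `G` of index `p³`. -/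
theorem ker_omega_normal_of_index_p_cubed {p : ℕ} (hp : p.Prime) {G : Type}
    [Group G] (χa χb : G → ZMod p) (ha : IsChar p χa) (hb : IsChar p χb)
    (hind : LinIndepPair χa χb) (σa σb : G)
    (haa : χa σa = 1) (hab : χa σb = 0) (hba : χb σa = 0) (hbb : χb σb = 1)
    (ω : ↥(charKer χb hb) → ZMod p) (hω : IsChar p ω)
    (hωeq : ∀ h : ↥(charKer χb hb),
      ω h - ω ⟨σb * ↑h * σb⁻¹, (charKer_normal χb hb).conj_mem ↑h h.2 σb⟩ =
        χa ↑h) :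
    (charKer χa ha ⊓
        Subgroup.map (charKer χb hb).subtype (charKer ω hω)).Normal ∧
    (charKer χa ha ⊓
        Subgroup.map (charKer χb hb).subtype (charKer ω hω)).index = p ^ 3 :=
  ker_omega_normal_of_index_p_cubed_general χa χb ha hb σa σb haa hba hbb ω hω hωeq
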